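/- For each m ≥ 5, setting p = P_m + P_{m−1}, the maximum length of a factor of x_3 having period p is P_{m+1} + P_m + P_{m−1} − 2. That is, there exists a position i such that x_3[i+j] = x_3[i+j+p] for all 0 ≤ j < P_{m+1} − 2, and there is no position i such that x_3[i+j] = x_3[i+j+p] for all 0 ≤ j < P_{m+1} − 1. Consequently x_3 contains, for every m ≥ 5, a factor of exponent exactly (P_{m+1} + P_m + P_{m−1} − 2)/(P_m + P_{m−1}) = 2 + (P_m − 2)/(P_m + P_{m−1}). -/

import Mathlib

/-- The Pell numbers: `P 0 = 0`, `P 1 = 1`, `P (n+2) = 2 * P (n+1) + P n`. -/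
def pell : ℕ → ℕ
  | 0 => 0
  | 1 => 1
  | n + 2 => 2 * pell (n + 1) + pell n

/-- The characteristic Sturmian word with slope `α = √2 - 1`, indexed from 1:
`c_α[n] = ⌊α(n+1)⌋ - ⌊αn⌋`. -/
noncomputable def calpha (n : ℕ) : ℤ :=
  ⌊(Real.sqrt 2 - 1) * ((n : ℝ) + 1)⌋ - ⌊(Real.sqrt 2 - 1) * (n : ℝ)⌋

/-- `zcount m` = number of indices `1 ≤ j ≤ m` with `c_α[j] = 0`. -/
noncomputable def zcount (m : ℕ) : ℕ :=
  ((Finset.Icc 1 m).filter fun j => calpha j = 0).card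

/-- `ocount m` = number of indices `1 ≤ j ≤ m` with `c_α[j] = 1`. -/
noncomputable def ocount (m : ℕ) : ℕ :=
  ((Finset.Icc 1 m).filter fun j => calpha j = 1).card

/-- The infinite balanced word `x₃` over `{0,1,2}`, indexed from 0, obtained from
`c_α` by replacing the 0's by `(01)^ω` and the 1's by `2^ω`. -/
noncomputable def x3 (i : ℕ) : ℕ :=
  if calpha (i + 1) = 0 then [0, 1].getD ((zcount (i + 1) - 1) % 2) 0
  else 2

/-!
Write `α = √2 - 1` and `p = P (j + 1) + P j` (so `m = j + 1`). Pell's identities give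
`α p = (P (j + 1) - P j) - (-1) ^ j (α ^ (j + 1) + α ^ (j + 2))`, hence
`⌊α (n + p)⌋ = ⌊α n⌋ + P (j + 1) - P j` except at the *defects* `n`, where `α n` lies within
`α ^ (j + 1) + α ^ (j + 2)` of an integer, on the side selected by the parity of `j`. Since `x₃` is
read off the increments of `⌊α n⌋` and the parity of the number of `0`s so far, it has period `p`
at every position not touching a defect and breaks it at both positions touching one.

By the Cassini identity, `(P (j + 1), P j)` and `(P (j + 2), P (j + 1))` form a basis of `ℤ²`, on
which the signed distance `(-1) ^ j (α n - k)` takes the values `α ^ (j + 1)` and `-α ^ (j + 2)`.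
In these coordinates `P (j + 1)` is the only defect below `P (j + 1) + P (j + 2)`, consecutive
defects are `P (j + 1)` or `P (j + 2)` apart, and no two defects are adjacent. So the longest
factor of period `p` fits between the defects `P (j + 1)` and `P (j + 1) + P (j + 2)`, while every
window of `P (j + 2) - 1` positions touches a defect.
-/

local notation "α" => √2 - 1

lemma floor_sub_sign_mul_of_not_exists {s : ℤ} (hs : s = 1 ∨ s = -1) {x δ : ℝ}
    (hδ : 0 ≤ δ) (hx : Irrational x) (hy : Irrational (x - s * δ))
    (h : ¬ ∃ k : ℤ, s * (x - k) ∈ Set.Ioo 0 δ) : ⌊x - s * δ⌋ = ⌊x⌋ := by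
  have hfl := Int.floor_le x
  have hlt := Int.lt_floor_add_one x
  rw [Int.floor_eq_iff]
  rcases hs with rfl | rfl
  · have hfl' : (⌊x⌋ : ℝ) < x := lt_of_le_of_ne hfl (hx.ne_int ⌊x⌋).symm
    have : ⌊x⌋ ≤ x - δ := by
      by_contra! hc
      exact h ⟨⌊x⌋, by push_cast; constructor <;> linarith⟩
    push_cast; constructor <;> linarith
  · have : x + δ ≤ ⌊x⌋ + 1 := by
      by_contra! hc
      exact h ⟨⌊x⌋ + 1, by push_cast; constructor <;> linarith⟩
    have hne := hy.ne_int (⌊x⌋ + 1)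
    push_cast at hne ⊢
    exact ⟨by linarith, lt_of_le_of_ne (by linarith) (by contrapose! hne; linarith)⟩

lemma floor_sub_sign_mul_of_exists {s : ℤ} (hs : s = 1 ∨ s = -1) {x δ : ℝ} (hδ : δ < 1)
    (h : ∃ k : ℤ, s * (x - k) ∈ Set.Ioo 0 δ) : ⌊x - s * δ⌋ = ⌊x⌋ - s := by
  obtain ⟨k, hk0, hkδ⟩ := h
  rcases hs with rfl | rfl
  · push_cast at hk0 hkδ ⊢
    have hk : ⌊x⌋ = k := by rw [Int.floor_eq_iff]; constructor <;> linarith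
    rw [hk, Int.floor_eq_iff]; push_cast; constructor <;> linarith
  · push_cast at hk0 hkδ ⊢
    have hk : ⌊x⌋ = k - 1 := by rw [Int.floor_eq_iff]; push_cast; constructor <;> linarith
    rw [hk, Int.floor_eq_iff]; push_cast; constructor <;> linarith

lemma int_cases_of_mul_sub_mul_mem_Ioo {u v : ℝ} (hv : 0 < v) (hvu : v < u) {a b : ℤ}
    (h : a * u - b * v ∈ Set.Ioo 0 (u + v)) :
    (a = 1 ∧ b = 0) ∨ (0 < a ∧ 0 < b) ∨ (a ≤ 0 ∧ b < 0) := by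
  obtain ⟨h0, h1⟩ := h
  rcases lt_trichotomy b 0 with hb | rfl | hb
  · have hb' : (b : ℝ) ≤ -1 := by exact_mod_cast Int.le_sub_one_of_lt hb
    have ha : a ≤ 0 := by
      by_contra! ha
      have ha' : (1 : ℝ) ≤ a := by exact_mod_cast ha
      nlinarith
    exact Or.inr (Or.inr ⟨ha, hb⟩)
  · simp only [Int.cast_zero, zero_mul, sub_zero] at h0 h1
    have ha0 : (0 : ℝ) < a := by nlinarith
    have ha2 : (a : ℝ) < 2 := by nlinarith
    norm_cast at ha0 ha2
    exact Or.inl ⟨by omega, rfl⟩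
  · have hb' : (1 : ℝ) ≤ b := by exact_mod_cast hb
    have ha : (0 : ℝ) < a := by
      by_contra! ha
      nlinarith
    exact Or.inr (Or.inl ⟨by exact_mod_cast ha, hb⟩)

lemma alpha_pos : 0 < α := sub_pos.mpr Real.one_lt_sqrt_two

lemma alpha_sq : α ^ 2 = 1 - 2 * α := by
  have h : √2 ^ 2 = 2 := Real.sq_sqrt (by norm_num)
  linear_combination h

lemma two_mul_alpha_lt_one : 2 * α < 1 := by
  nlinarith [alpha_sq, alpha_pos]

lemma irrational_alpha_mul {n : ℕ} (hn : n ≠ 0) : Irrational (α * n) := by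
  have h := (irrational_sqrt_two.sub_intCast 1).mul_natCast hn
  simpa using h

lemma alpha_pow_add_alpha_pow_le {i j : ℕ} (hij : i ≤ j) :
    α ^ (j + 1) + α ^ (j + 2) ≤ α ^ (i + 1) + α ^ (i + 2) := by
  have h0 := alpha_pos.le
  have h1 : α ≤ 1 := by linarith [two_mul_alpha_lt_one, alpha_pos]
  exact add_le_add (pow_le_pow_of_le_one h0 h1 (by omega)) (pow_le_pow_of_le_one h0 h1 (by omega))

lemma pell_succ_succ (n : ℕ) : pell (n + 2) = 2 * pell (n + 1) + pell n := rfl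

lemma pell_succ_pos (n : ℕ) : 0 < pell (n + 1) := by
  induction n with
  | zero => simp [pell]
  | succ n ih => rw [pell_succ_succ]; omega

lemma pell_succ_lt_pell_succ_succ (n : ℕ) : pell (n + 1) < pell (n + 2) := by
  have := pell_succ_pos n
  rw [pell_succ_succ]; omega

lemma pell_succ_sq_sub_mul (n : ℕ) :
    (pell (n + 1) : ℤ) ^ 2 - pell n * pell (n + 2) = (-1) ^ n := by
  induction n with
  | zero => simp [pell]
  | succ n ih =>
    rw [pell_succ_succ (n + 1), pell_succ_succ n] at *
    push_cast at *
    linear_combination -ih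

lemma neg_one_pow_mul_alpha_mul_pell_sub (n : ℕ) :
    (-1 : ℝ) ^ n * (α * pell (n + 1) - pell n) = α ^ (n + 1) := by
  induction n with
  | zero => simp [pell]
  | succ n ih =>
    rw [pell_succ_succ]
    push_cast
    linear_combination α * ih - (-1 : ℝ) ^ n * pell (n + 1) * alpha_sq

lemma neg_one_pow_mul_alpha_mul_pell_succ_sub (j : ℕ) :
    (-1 : ℝ) ^ j * (α * pell (j + 2) - pell (j + 1)) = -α ^ (j + 2) := by
  linear_combination -neg_one_pow_mul_alpha_mul_pell_sub (j + 1)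

lemma alpha_mul_add_period (j n : ℕ) :
    α * ((n + (pell (j + 1) + pell j) : ℕ) : ℝ) =
      α * n - (-1) ^ j * (α ^ (j + 1) + α ^ (j + 2)) +
        ((pell (j + 1) - pell j : ℤ) : ℝ) := by
  have h1 := neg_one_pow_mul_alpha_mul_pell_sub j
  have h2 := neg_one_pow_mul_alpha_mul_pell_succ_sub j
  have hs : ((-1 : ℝ) ^ j) ^ 2 = 1 := by rw [← pow_mul, pow_mul', neg_one_sq, one_pow]
  rw [pell_succ_succ] at h2
  push_cast at h2 ⊢
  linear_combination
    (-1 : ℝ) ^ j * (h2 - h1) - (α * (pell (j + 1) + pell j) - pell (j + 1) + pell j) * hs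

noncomputable def alphaFloor (n : ℕ) : ℤ := ⌊α * n⌋

def IsDefect (j n : ℕ) : Prop :=
  ∃ k : ℤ, (-1) ^ j * (α * n - k) ∈ Set.Ioo 0 (α ^ (j + 1) + α ^ (j + 2))

lemma alphaFloor_add_period_of_not_isDefect {j n : ℕ} (hn : n ≠ 0) (h : ¬ IsDefect j n) :
    alphaFloor (n + (pell (j + 1) + pell j)) = alphaFloor n + (pell (j + 1) - pell j) := by
  have hirr : Irrational (α * n - (-1) ^ j * (α ^ (j + 1) + α ^ (j + 2))) := by
    have := (irrational_alpha_mul (n := n + (pell (j + 1) + pell j)) (by omega)).sub_intCast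
      (pell (j + 1) - pell j)
    rwa [alpha_mul_add_period, add_sub_cancel_right] at this
  have key := floor_sub_sign_mul_of_not_exists (δ := α ^ (j + 1) + α ^ (j + 2))
    (neg_one_pow_eq_or ℤ j) (by positivity [alpha_pos]) (irrational_alpha_mul hn)
    (by push_cast; exact hirr) (by push_cast; exact h)
  push_cast at key
  rw [alphaFloor, alpha_mul_add_period, Int.floor_add_intCast, key, alphaFloor]

lemma alphaFloor_add_period_of_isDefect {j n : ℕ} (h : IsDefect j n) :
    alphaFloor (n + (pell (j + 1) + pell j)) =
      alphaFloor n + (pell (j + 1) - pell j) - (-1) ^ j := by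
  have hδ : α ^ (j + 1) + α ^ (j + 2) < 1 := by
    have := alpha_pow_add_alpha_pow_le (Nat.zero_le j)
    rw [zero_add, zero_add, pow_one] at this
    linarith [alpha_sq, alpha_pos]
  have key := floor_sub_sign_mul_of_exists (x := α * n) (neg_one_pow_eq_or ℤ j) hδ
    (by push_cast; exact h)
  push_cast at key
  rw [alphaFloor, alpha_mul_add_period, Int.floor_add_intCast, key, alphaFloor]
  ring

lemma isDefect_pell_succ (j : ℕ) : IsDefect j (pell (j + 1)) :=
  ⟨pell j, by
    rw [Int.cast_natCast, neg_one_pow_mul_alpha_mul_pell_sub]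
    exact ⟨pow_pos alpha_pos _, lt_add_of_pos_right _ (pow_pos alpha_pos _)⟩⟩

lemma isDefect_add_pell {j n : ℕ} (h : IsDefect j n) :
    IsDefect j (n + pell (j + 1)) ∨ IsDefect j (n + pell (j + 2)) := by
  obtain ⟨k, h0, h1⟩ := h
  have hu := neg_one_pow_mul_alpha_mul_pell_sub j
  have hv := neg_one_pow_mul_alpha_mul_pell_succ_sub j
  have hpos := pow_pos alpha_pos (j + 1)
  set x := (-1) ^ j * (α * n - k)
  have hshift : ∀ a b : ℕ, (-1) ^ j * (α * ((n + a : ℕ) : ℝ) - ((k + b : ℤ) : ℝ)) =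
      x + (-1) ^ j * (α * a - b) := fun a b => by push_cast; ring
  rcases lt_trichotomy x (α ^ (j + 2)) with hx | hx | hx
  · refine Or.inl ⟨k + pell j, ?_⟩
    rw [hshift, hu]
    constructor <;> linarith
  · have hzero := hshift (pell (j + 2)) (pell (j + 1))
    rw [hv, hx, add_neg_cancel, mul_eq_zero, sub_eq_zero] at hzero
    exact absurd (hzero.resolve_left (pow_ne_zero _ (by norm_num)))
      ((irrational_alpha_mul (Nat.add_pos_right n (pell_succ_pos (j + 1))).ne').ne_int _)
  · refine Or.inr ⟨k + pell (j + 1), ?_⟩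
    rw [hshift, hv]
    constructor <;> linarith [pow_pos alpha_pos (j + 2)]

lemma exists_pell_coeffs (j : ℕ) (n k : ℤ) :
    ∃ a b : ℤ, n = a * pell (j + 1) + b * pell (j + 2) ∧ k = a * pell j + b * pell (j + 1) := by
  -- Invert the matrix with columns `(P (j+1), P j)`, `(P (j+2), P (j+1))`, of determinant `(-1)^j`.
  have hdet := pell_succ_sq_sub_mul j
  have hs : ((-1 : ℤ) ^ j) ^ 2 = 1 := by rw [← pow_mul, pow_mul', neg_one_sq, one_pow]
  refine ⟨(-1) ^ j * (pell (j + 1) * n - pell (j + 2) * k),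
    (-1) ^ j * (pell (j + 1) * k - pell j * n), ?_, ?_⟩
  · linear_combination -((-1) ^ j * n) * hdet - n * hs
  · linear_combination -((-1) ^ j * k) * hdet - k * hs

lemma eq_pell_succ_of_isDefect {j n : ℕ} (h : IsDefect j n)
    (hn : n < pell (j + 1) + pell (j + 2)) : n = pell (j + 1) := by
  obtain ⟨k, hk⟩ := h
  obtain ⟨a, b, hna, hkb⟩ := exists_pell_coeffs j n k
  have hab : (-1) ^ j * (α * n - k) = a * α ^ (j + 1) - b * α ^ (j + 2) := by
    rw [← Int.cast_natCast n, hna, hkb]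
    push_cast
    linear_combination a * neg_one_pow_mul_alpha_mul_pell_sub j +
      b * neg_one_pow_mul_alpha_mul_pell_succ_sub j
  rw [hab] at hk
  have hvu : α ^ (j + 2) < α ^ (j + 1) :=
    pow_lt_pow_right_of_lt_one₀ alpha_pos (by linarith [two_mul_alpha_lt_one, alpha_pos])
      (by omega)
  have h1 := pell_succ_pos j
  have h2 := pell_succ_pos (j + 1)
  zify at hn h1 h2 ⊢
  rcases int_cases_of_mul_sub_mul_mem_Ioo (pow_pos alpha_pos _) hvu hk with
    ⟨rfl, rfl⟩ | ⟨ha, hb⟩ | ⟨ha, hb⟩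
  · simpa using hna
  · nlinarith
  · nlinarith

lemma exists_isDefect_mem_Ico (j N : ℕ) :
    ∃ n, IsDefect j n ∧ n ∈ Set.Ico N (N + pell (j + 2)) := by
  have h1 := pell_succ_lt_pell_succ_succ j
  have h2 := pell_succ_pos j
  induction N with
  | zero => exact ⟨pell (j + 1), isDefect_pell_succ j, by simp, by simpa using h1⟩
  | succ N ih =>
    obtain ⟨n, hn, hN, hNn⟩ := ih
    rcases hN.lt_or_eq with hlt | rfl
    · exact ⟨n, hn, hlt, by omega⟩
    · rcases isDefect_add_pell hn with h | h
      · exact ⟨_, h, by omega, by omega⟩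
      · exact ⟨_, h, by omega, by omega⟩

lemma not_isDefect_succ {j n : ℕ} (hj : 1 ≤ j) (h : IsDefect j n) : ¬ IsDefect j (n + 1) := by
  rintro ⟨k', h0', h1'⟩
  obtain ⟨k, h0, h1⟩ := h
  have hα := two_mul_alpha_lt_one
  have hαpos := alpha_pos
  have hδ : α ^ (j + 1) + α ^ (j + 2) < α := by
    have := alpha_pow_add_alpha_pow_le hj
    have h3 : α ^ (1 + 1) + α ^ (1 + 2) = α * (1 - α) := by linear_combination α * alpha_sq
    nlinarith
  push_cast at h0' h1'
  suffices hm : (0 : ℝ) < k' - k ∧ (k' : ℝ) - k < 1 by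
    obtain ⟨hm0, hm1⟩ := hm
    norm_cast at hm0 hm1
    omega
  rcases neg_one_pow_eq_or ℝ j with hs | hs <;> simp only [hs] at h0 h1 h0' h1' <;>
    constructor <;> linarith

lemma calpha_eq_alphaFloor_sub (n : ℕ) : calpha n = alphaFloor (n + 1) - alphaFloor n := by
  simp [calpha, alphaFloor]

lemma alphaFloor_one : alphaFloor 1 = 0 := by
  rw [alphaFloor, Nat.cast_one, mul_one, Int.floor_eq_zero_iff]
  exact ⟨alpha_pos.le, by linarith [two_mul_alpha_lt_one, alpha_pos]⟩

lemma calpha_eq_zero_or_one (n : ℕ) : calpha n = 0 ∨ calpha n = 1 := by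
  have h1 : ⌊α * n⌋ ≤ ⌊α * (n + 1)⌋ := Int.floor_le_floor (by nlinarith [alpha_pos])
  have h2 : ⌊α * (n + 1)⌋ ≤ ⌊α * n⌋ + 1 := by
    rw [← Int.floor_add_one]
    exact Int.floor_le_floor (by nlinarith [alpha_pos, two_mul_alpha_lt_one])
  rw [calpha]
  omega

lemma zcount_eq_sub_alphaFloor (n : ℕ) : (zcount n : ℤ) = n - alphaFloor (n + 1) := by
  induction n with
  | zero => simp [zcount, alphaFloor_one]
  | succ n ih =>
    have hcard : zcount (n + 1) = zcount n + if calpha (n + 1) = 0 then 1 else 0 := by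
      rw [zcount, zcount, ← Finset.insert_Icc_right_eq_Icc_add_one (by omega),
        Finset.filter_insert]
      split_ifs <;> simp
    rw [hcard]
    have := calpha_eq_alphaFloor_sub (n + 1)
    rcases calpha_eq_zero_or_one (n + 1) with h | h <;> simp [h] <;> omega

lemma x3_eq_two_iff (i : ℕ) : x3 i = 2 ↔ calpha (i + 1) = 1 := by
  rcases calpha_eq_zero_or_one (i + 1) with h | h
  · have := Nat.mod_lt (zcount (i + 1) - 1) two_pos
    interval_cases hr : (zcount (i + 1) - 1) % 2 <;> simp [x3, h, hr]
  · simp [x3, h]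

lemma x3_ne_of_calpha_ne {i i' : ℕ} (h : calpha (i + 1) ≠ calpha (i' + 1)) :
    x3 i ≠ x3 i' := by
  intro he
  have := x3_eq_two_iff i
  have := x3_eq_two_iff i'
  rcases calpha_eq_zero_or_one (i + 1) with h1 | h1 <;>
    rcases calpha_eq_zero_or_one (i' + 1) with h2 | h2 <;> simp_all

lemma x3_add_eq_of_alphaFloor_add {i p : ℕ} {c : ℤ} (hpc : Even (p - c))
    (h1 : alphaFloor (i + 1 + p) = alphaFloor (i + 1) + c)
    (h2 : alphaFloor (i + 2 + p) = alphaFloor (i + 2) + c) : x3 (i + p) = x3 i := by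
  have hc : calpha (i + p + 1) = calpha (i + 1) := by
    rw [calpha_eq_alphaFloor_sub, calpha_eq_alphaFloor_sub, show i + p + 1 = i + 1 + p by omega,
      show i + 1 + p + 1 = i + 2 + p by omega, h1, h2]
    ring
  rcases calpha_eq_zero_or_one (i + 1) with h | h
  · have hpos : 0 < zcount (i + 1) := Finset.card_pos.mpr ⟨i + 1, by simp [h]⟩
    have hpos' : 0 < zcount (i + p + 1) := Finset.card_pos.mpr ⟨i + p + 1, by simp [hc, h]⟩
    have hz : (zcount (i + 1) : ℤ) = i + 1 - alphaFloor (i + 2) := by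
      exact_mod_cast zcount_eq_sub_alphaFloor (i + 1)
    have hz' := zcount_eq_sub_alphaFloor (i + p + 1)
    rw [show i + p + 1 + 1 = i + 2 + p by omega, h2] at hz'
    obtain ⟨r, hr⟩ := hpc
    -- `zcount` grows by the even number `p - c` over one period: the `(01)^ω` phase is kept.
    have hpar : (zcount (i + p + 1) - 1) % 2 = (zcount (i + 1) - 1) % 2 := by omega
    simp only [x3, hc, h, hpar, if_true]
  · rw [(x3_eq_two_iff i).2 h, (x3_eq_two_iff _).2 (hc.trans h)]

lemma x3_add_period_of_not_isDefect {j i : ℕ} (h1 : ¬ IsDefect j (i + 1))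
    (h2 : ¬ IsDefect j (i + 2)) : x3 (i + (pell (j + 1) + pell j)) = x3 i :=
  x3_add_eq_of_alphaFloor_add ⟨pell j, by push_cast; ring⟩
    (alphaFloor_add_period_of_not_isDefect (by omega) h1)
    (alphaFloor_add_period_of_not_isDefect (by omega) h2)

lemma x3_add_period_ne_of_isDefect {j i : ℕ} (hj : 1 ≤ j)
    (h : IsDefect j (i + 1) ∨ IsDefect j (i + 2)) :
    x3 (i + (pell (j + 1) + pell j)) ≠ x3 i := by
  set p := pell (j + 1) + pell j
  set c : ℤ := pell (j + 1) - pell j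
  have key : alphaFloor (i + 2 + p) - alphaFloor (i + 1 + p) ≠
      alphaFloor (i + 2) - alphaFloor (i + 1) := by
    generalize hs : (-1 : ℤ) ^ j = s
    have hs' : s = 1 ∨ s = -1 := hs ▸ neg_one_pow_eq_or ℤ j
    rcases h with h | h
    · have e1 : alphaFloor (i + 1 + p) = alphaFloor (i + 1) + c - s :=
        hs ▸ alphaFloor_add_period_of_isDefect h
      have e2 : alphaFloor (i + 2 + p) = alphaFloor (i + 2) + c :=
        alphaFloor_add_period_of_not_isDefect (by omega) (not_isDefect_succ hj h)
      omega
    · have e1 : alphaFloor (i + 1 + p) = alphaFloor (i + 1) + c :=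
        alphaFloor_add_period_of_not_isDefect (by omega) (fun h1 => not_isDefect_succ hj h1 h)
      have e2 : alphaFloor (i + 2 + p) = alphaFloor (i + 2) + c - s :=
        hs ▸ alphaFloor_add_period_of_isDefect h
      omega
  refine (x3_ne_of_calpha_ne ?_).symm
  rwa [calpha_eq_alphaFloor_sub, calpha_eq_alphaFloor_sub,
    show i + p + 1 + 1 = i + 2 + p by ring, show i + p + 1 = i + 1 + p by ring, Ne.eq_def, eq_comm]

/-- For every `m ≥ 5`, with `p = P m + P (m-1)`, the maximal length of a factor of `x₃`
of period `p` is `P (m+1) + P m + P (m-1) - 2`; that is, there is a position `i` with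
`x₃[i+j] = x₃[i+j+p]` for all `j < P (m+1) - 2`, no position `i` with
`x₃[i+j] = x₃[i+j+p]` for all `j < P (m+1) - 1`, and the resulting maximal exponent is
`(P (m+1) + P m + P (m-1) - 2) / (P m + P (m-1)) = 2 + (P m - 2) / (P m + P (m-1))`. -/
theorem x3_maximal_repetitions (m : ℕ) (hm : 5 ≤ m) :
    (∃ i, ∀ j, j < pell (m + 1) - 2 →
      x3 (i + j) = x3 (i + j + (pell m + pell (m - 1)))) ∧
    (¬ ∃ i, ∀ j, j < pell (m + 1) - 1 →
      x3 (i + j) = x3 (i + j + (pell m + pell (m - 1)))) ∧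
    ((pell (m + 1) : ℚ) + (pell m : ℚ) + (pell (m - 1) : ℚ) - 2) /
        ((pell m : ℚ) + (pell (m - 1) : ℚ)) =
      2 + ((pell m : ℚ) - 2) / ((pell m : ℚ) + (pell (m - 1) : ℚ)) := by
  obtain ⟨j, rfl⟩ : ∃ j, m = j + 1 := ⟨m - 1, by omega⟩
  rw [Nat.add_sub_cancel, show j + 1 + 1 = j + 2 from rfl]
  refine ⟨⟨pell (j + 1), fun i hi => ?_⟩, fun ⟨i, hi⟩ => ?_, ?_⟩
  · have hgap : ∀ n, pell (j + 1) < n → n < pell (j + 1) + pell (j + 2) → ¬ IsDefect j n :=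
      fun n h1 h2 hn => (eq_pell_succ_of_isDefect hn h2 ▸ h1).false
    exact (x3_add_period_of_not_isDefect (hgap _ (by omega) (by omega))
      (hgap _ (by omega) (by omega))).symm
  · obtain ⟨n, hn, hin, hni⟩ := exists_isDefect_mem_Ico j (i + 1)
    have := pell_succ_lt_pell_succ_succ j
    have := pell_succ_pos j
    obtain ⟨t, ht, hdef⟩ :
        ∃ t < pell (j + 2) - 1, IsDefect j (i + t + 1) ∨ IsDefect j (i + t + 2) := by
      rcases Nat.lt_or_ge n (i + 2) with hn2 | hn2
      · exact ⟨0, by omega, Or.inl (by rwa [show i + 0 + 1 = n by omega])⟩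
      · exact ⟨n - i - 2, by omega, Or.inr (by rwa [show i + (n - i - 2) + 2 = n by omega])⟩
    exact x3_add_period_ne_of_isDefect (by omega) hdef (hi t ht).symm
  · have hden : (0 : ℚ) < pell (j + 1) + pell j := by
      have := pell_succ_pos j
      positivity
    rw [pell_succ_succ]
    push_cast
    field_simp
    ring
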